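/- arXiv:1802.09954 — 2 statements merged into one kernel-verified Lean document; each statement's English description precedes it below -/
import Mathlib

section
/- Along the line segment X(t) = X + tH (with H = X* − X ⪰ 0 componentwise and X a fixed point of F), the map Φ(t) = F(X(t)) is matrix-concave: −∂²Φ_i(t)/∂t² = 2 Φ_i(t) D_i(t) (X_{-i}(t) − Φ_i(t)) D_i(t) Φ_i(t) is positive semidefinite for each i, where D_i(t) = X_{-i}(t)⁻¹ H_{-i} X_{-i}(t)⁻¹. -/
open Matrix BigOperators Filter Topology

/-- Orthogonal projection onto the coordinate subspace determined by `S`. -/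
noncomputable def proj (K : Type*) [Fintype K] [DecidableEq K] (S : Finset K) :
    Matrix K K ℝ :=
  Matrix.diagonal (fun k => if k ∈ S then (1 : ℝ) else 0)

/-- `B ∈ S_≻^{H}` : symmetric nonnegative definite, vanishing on vectors orthogonal
to the coordinate subspace `H` given by `S`, and strictly positive definite on `H`. -/
def SPDOn {K : Type*} [Fintype K] [DecidableEq K] (S : Finset K) (B : Matrix K K ℝ) : Prop :=
  B.PosSemidef ∧
  (∀ x : K → ℝ, (∀ j, j ∉ S → x j = 0) → x ≠ 0 → 0 < x ⬝ᵥ (B *ᵥ x)) ∧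
  (∀ x : K → ℝ, (∀ j, j ∈ S → x j = 0) → B *ᵥ x = 0)

/-- The inverse of `B` computed on the coordinate subspace given by `S`, extended by zero
(`B^{-H}` in the paper). -/
noncomputable def invOn {K : Type*} [Fintype K] [DecidableEq K] (S : Finset K)
    (B : Matrix K K ℝ) : Matrix K K ℝ :=
  proj K S * (B + proj K Sᶜ)⁻¹ * proj K S

/-- `A ≺_{H} B` : the difference `B - A` belongs to `S_≻^{H}`. -/
def ltOn {K : Type*} [Fintype K] [DecidableEq K] (S : Finset K) (A B : Matrix K K ℝ) : Prop :=
  SPDOn S (B - A)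

/-- The best-response map `F_i(X) = (B_i^{-H_i} + π_i (X_{-i})⁻¹ π_i)^{-H_i}`. -/
noncomputable def Fmap {I K : Type*} [Fintype I] [DecidableEq I] [Fintype K] [DecidableEq K]
    (Ki : I → Finset K) (B : I → Matrix K K ℝ) (X : I → Matrix K K ℝ) (i : I) :
    Matrix K K ℝ :=
  invOn (Ki i) (invOn (Ki i) (B i) +
    proj K (Ki i) * (∑ j ∈ Finset.univ.erase i, X j)⁻¹ * proj K (Ki i))

/-!
Write `π = proj K (Ki i)`, `C = B_i^{-H_i}` and `N(t) = C + π X_{-i}(t)⁻¹ π + (1 - π)`, so that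
`Φ_i(t) = π N(t)⁻¹ π`. Differentiating the inverse twice gives the Riccati equation
`Φ' = Φ D Φ` and then `Φ'' = -2 Φ D (X_{-i} - Φ) D Φ`, using only `X_{-i}' = H_{-i}` and
`X_{-i}⁻¹ X_{-i} = 1`. The bound `Φ ⪯ X_{-i}` is a Schur complement argument: the block matrix
`[N π; π X_{-i}]` is positive semidefinite because `N - π X_{-i}⁻¹ π = C + (1 - π) ⪰ 0`, hence so is
`X_{-i} - π N⁻¹ π`. Every coordinate lies in at least two of the subspaces `H_j`, which makes
`X_{-i}` positive definite.
-/

section Hermitian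

variable {K : Type*} [Fintype K]

lemma dotProduct_mulVec_of_isHermitian {A : Matrix K K ℝ} (hA : A.IsHermitian) (x y : K → ℝ) :
    x ⬝ᵥ (A *ᵥ y) = (A *ᵥ x) ⬝ᵥ y := by
  rw [dotProduct_mulVec, ← mulVec_transpose, ← conjTranspose_eq_transpose_of_trivial, hA.eq]

lemma dotProduct_mul_mul_mulVec_of_isHermitian {P : Matrix K K ℝ} (hP : P.IsHermitian)
    (A : Matrix K K ℝ) (x : K → ℝ) :
    x ⬝ᵥ ((P * A * P) *ᵥ x) = (P *ᵥ x) ⬝ᵥ (A *ᵥ (P *ᵥ x)) := by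
  rw [← mulVec_mulVec, ← mulVec_mulVec, dotProduct_mulVec_of_isHermitian hP]

end Hermitian

section Projection

variable {K : Type*} [Fintype K] [DecidableEq K]

lemma proj_mulVec_apply (S : Finset K) (x : K → ℝ) (k : K) :
    (proj K S *ᵥ x) k = if k ∈ S then x k else 0 := by
  simp [proj, mulVec_diagonal]

lemma isHermitian_proj (S : Finset K) : (proj K S).IsHermitian :=
  isHermitian_diagonal _

lemma posSemidef_proj (S : Finset K) : (proj K S).PosSemidef :=
  PosSemidef.diagonal fun k => by dsimp; split_ifs <;> norm_num

lemma proj_add_proj_compl (S : Finset K) : proj K S + proj K Sᶜ = 1 := by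
  rw [proj, proj, diagonal_add, ← diagonal_one]
  congr 1
  funext k
  by_cases hk : k ∈ S <;> simp [hk]

lemma posDef_add_proj_compl_of_dotProduct_pos {S : Finset K} {M : Matrix K K ℝ} (hM : M.PosSemidef)
    (hpos : ∀ x, proj K S *ᵥ x ≠ 0 → 0 < x ⬝ᵥ (M *ᵥ x)) : (M + proj K Sᶜ).PosDef := by
  refine PosDef.of_dotProduct_mulVec_pos (hM.1.add (isHermitian_proj _)) fun x hx => ?_
  rw [star_trivial, add_mulVec, dotProduct_add]
  have hM0 : 0 ≤ x ⬝ᵥ (M *ᵥ x) := by simpa using hM.dotProduct_mulVec_nonneg x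
  have hQ0 : 0 ≤ x ⬝ᵥ (proj K Sᶜ *ᵥ x) := by
    simpa using (posSemidef_proj Sᶜ).dotProduct_mulVec_nonneg x
  by_cases hp : proj K S *ᵥ x = 0
  · have hQx : proj K Sᶜ *ᵥ x = x := by
      rw [eq_sub_of_add_eq' (proj_add_proj_compl S), sub_mulVec, hp, one_mulVec, sub_zero]
    rw [hQx] at hQ0 ⊢
    exact add_pos_of_nonneg_of_pos hM0 (by simpa using dotProduct_star_self_pos_iff.mpr hx)
  · exact add_pos_of_pos_of_nonneg (hpos x hp) hQ0

end Projection

section Sandwich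

variable {n R : Type*} [Fintype n] [Ring R] [PartialOrder R] [StarRing R]

lemma Matrix.PosSemidef.mul_mul_mul_mul_of_isHermitian {P Q M : Matrix n n R}
    (hP : P.IsHermitian) (hQ : Q.IsHermitian) (hM : M.PosSemidef) :
    (P * Q * M * Q * P).PosSemidef := by
  simpa only [conjTranspose_mul, hP.eq, hQ.eq, Matrix.mul_assoc] using
    hM.conjTranspose_mul_mul_same (Q * P)

end Sandwich

section Schur

variable {n 𝕜 : Type*} [Fintype n] [DecidableEq n] [Field 𝕜] [PartialOrder 𝕜] [StarRing 𝕜]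
  [StarOrderedRing 𝕜]

/-- Both sides say that the block matrix `[A B; Bᴴ D]` is positive semidefinite. -/
theorem Matrix.PosDef.posSemidef_sub_mul_inv_mul_conjTranspose_iff {A D : Matrix n n 𝕜}
    (hA : A.PosDef) (hD : D.PosDef) (B : Matrix n n 𝕜) :
    (A - B * D⁻¹ * Bᴴ).PosSemidef ↔ (D - Bᴴ * A⁻¹ * B).PosSemidef := by
  let _ : Invertible A := hA.isUnit.invertible
  let _ : Invertible D := hD.isUnit.invertible
  rw [← PosDef.fromBlocks₂₂ A B hD, PosDef.fromBlocks₁₁ B D hA]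

end Schur

section SPDOn

variable {K : Type*} [Fintype K] [DecidableEq K] {S : Finset K}

lemma SPDOn.dotProduct_mulVec_eq {B : Matrix K K ℝ} (h : SPDOn S B) (x : K → ℝ) :
    x ⬝ᵥ (B *ᵥ x) = (proj K S *ᵥ x) ⬝ᵥ (B *ᵥ (proj K S *ᵥ x)) := by
  have hB : ∀ y, B *ᵥ y = B *ᵥ (proj K S *ᵥ y) := fun y => by
    have hy : B *ᵥ (proj K Sᶜ *ᵥ y) = 0 :=
      h.2.2 _ fun j hj => by simp [proj_mulVec_apply, hj]
    conv_lhs => rw [← one_mulVec y, ← proj_add_proj_compl S, add_mulVec, mulVec_add, hy, add_zero]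
  rw [hB, dotProduct_mulVec_of_isHermitian h.1.1, hB, ← dotProduct_mulVec_of_isHermitian h.1.1]

lemma SPDOn.dotProduct_mulVec_pos {B : Matrix K K ℝ} (h : SPDOn S B) {x : K → ℝ}
    (hx : proj K S *ᵥ x ≠ 0) : 0 < x ⬝ᵥ (B *ᵥ x) := by
  rw [h.dotProduct_mulVec_eq]
  exact h.2.1 _ (fun j hj => by simp [proj_mulVec_apply, hj]) hx

lemma SPDOn.posDef_add_proj_compl {B : Matrix K K ℝ} (h : SPDOn S B) :
    (B + proj K Sᶜ).PosDef :=
  posDef_add_proj_compl_of_dotProduct_pos h.1 fun _ => h.dotProduct_mulVec_pos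

lemma posDef_add_proj_mul_mul_proj_add_proj_compl {C A : Matrix K K ℝ} (hC : C.PosSemidef)
    (hA : A.PosDef) : (C + proj K S * A * proj K S + proj K Sᶜ).PosDef := by
  have hπ := isHermitian_proj (K := K) S
  refine posDef_add_proj_compl_of_dotProduct_pos (hC.add ?_) fun x hx => ?_
  · simpa only [hπ.eq] using hA.posSemidef.mul_mul_conjTranspose_same (proj K S)
  · rw [add_mulVec, dotProduct_add, dotProduct_mul_mul_mulVec_of_isHermitian hπ]
    exact add_pos_of_nonneg_of_pos (by simpa using hC.dotProduct_mulVec_nonneg x)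
      (by simpa using hA.dotProduct_mulVec_pos hx)

lemma posSemidef_invOn {M : Matrix K K ℝ} (h : (M + proj K Sᶜ).PosDef) :
    (invOn S M).PosSemidef := by
  rw [invOn]
  simpa only [(isHermitian_proj S).eq] using h.inv.posSemidef.mul_mul_conjTranspose_same (proj K S)

lemma posSemidef_sub_invOn {C m : Matrix K K ℝ} (hC : C.PosSemidef) (hm : m.PosDef) :
    (m - invOn S (C + proj K S * m⁻¹ * proj K S)).PosSemidef := by
  have hN := posDef_add_proj_mul_mul_proj_add_proj_compl (S := S) hC hm.inv
  have hschur := (hN.posSemidef_sub_mul_inv_mul_conjTranspose_iff hm (proj K S)).mp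
  rw [(isHermitian_proj S).eq] at hschur
  refine hschur ?_
  rw [add_sub_right_comm, add_sub_cancel_right]
  exact hC.add (posSemidef_proj _)

end SPDOn

lemma posDef_sum_erase_of_SPDOn {I K : Type*} [Fintype I] [DecidableEq I] [Fintype K]
    [DecidableEq K] {Ki : I → Finset K}
    (hcover : ∀ k : K, 2 ≤ (Finset.univ.filter (fun i : I => k ∈ Ki i)).card)
    {Y : I → Matrix K K ℝ} (hY : ∀ j, SPDOn (Ki j) (Y j)) (i : I) :
    (∑ j ∈ Finset.univ.erase i, Y j).PosDef := by
  refine PosDef.of_dotProduct_mulVec_pos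
    (posSemidef_sum _ fun j _ => (hY j).1).1 fun x hx => ?_
  obtain ⟨k, hk⟩ := Function.ne_iff.mp hx
  obtain ⟨j, hj, hji⟩ := Finset.exists_mem_ne (one_lt_two.trans_le (hcover k)) i
  have hkj : k ∈ Ki j := (Finset.mem_filter.mp hj).2
  rw [star_trivial, sum_mulVec, dotProduct_sum]
  refine Finset.sum_pos' (fun j _ => by simpa using (hY j).1.dotProduct_mulVec_nonneg x)
    ⟨j, Finset.mem_erase.mpr ⟨hji, Finset.mem_univ _⟩, (hY j).dotProduct_mulVec_pos fun h => hk ?_⟩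
  simpa [proj_mulVec_apply, hkj] using congrFun h k

section Derivatives

attribute [local instance] Matrix.frobeniusSeminormedAddCommGroup
  Matrix.frobeniusNormedAddCommGroup Matrix.frobeniusNormedSpace Matrix.frobeniusNormedRing
  Matrix.frobeniusNormedAlgebra

variable {K : Type*} [Fintype K]

lemma HasDerivAt.matrix_apply {f : ℝ → Matrix K K ℝ} {f' : Matrix K K ℝ} {s : ℝ}
    (hf : HasDerivAt f f' s) (k l : K) : HasDerivAt (fun u => f u k l) (f' k l) s :=
  let e : Matrix K K ℝ →ₗ[ℝ] ℝ := LinearMap.proj l ∘ₗ LinearMap.proj k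
  e.toContinuousLinearMap.hasFDerivAt.comp_hasDerivAt s hf

variable [DecidableEq K]

lemma HasDerivAt.nonsing_inv {f : ℝ → Matrix K K ℝ} {f' : Matrix K K ℝ} {s : ℝ}
    (hf : HasDerivAt f f' s) (h : IsUnit (f s)) :
    HasDerivAt (fun u => (f u)⁻¹) (-((f s)⁻¹ * f' * (f s)⁻¹)) s := by
  have : CompleteSpace (Matrix K K ℝ) := FiniteDimensional.complete ℝ _
  have hinv : (fun u => (f u)⁻¹) = Ring.inverse ∘ f := by
    funext u; simp [nonsing_inv_eq_ringInverse]
  rw [hinv]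
  refine ((hasFDerivAt_ringInverse (𝕜 := ℝ) h.unit).comp_hasDerivAt s hf).congr_deriv ?_
  simp [coe_units_inv, IsUnit.unit_spec]

lemma HasDerivAt.invOn {S : Finset K} {M : ℝ → Matrix K K ℝ} {M' : Matrix K K ℝ} {s : ℝ}
    (hM : HasDerivAt M M' s) (h : IsUnit (M s + proj K Sᶜ)) :
    HasDerivAt (fun u => invOn S (M u))
      (-(proj K S * ((M s + proj K Sᶜ)⁻¹ * M' * (M s + proj K Sᶜ)⁻¹) * proj K S)) s := by
  have := (((hM.add_const (proj K Sᶜ)).nonsing_inv h).const_mul (proj K S)).mul_const (proj K S)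
  rw [Matrix.mul_neg, Matrix.neg_mul] at this
  exact this

lemma hasDerivAt_invOn_add_proj_mul_inv_mul_proj {S : Finset K} {C H : Matrix K K ℝ}
    {X : ℝ → Matrix K K ℝ} {s : ℝ} (hX : HasDerivAt X H s) (hXs : IsUnit (X s))
    (hN : IsUnit (C + proj K S * (X s)⁻¹ * proj K S + proj K Sᶜ)) :
    HasDerivAt (fun u => invOn S (C + proj K S * (X u)⁻¹ * proj K S))
      (invOn S (C + proj K S * (X s)⁻¹ * proj K S) * ((X s)⁻¹ * H * (X s)⁻¹) *
        invOn S (C + proj K S * (X s)⁻¹ * proj K S)) s := by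
  refine ((((hX.nonsing_inv hXs).const_mul (proj K S)).mul_const (proj K S)).const_add C
    |>.invOn hN).congr_deriv ?_
  simp only [invOn, Matrix.mul_neg, Matrix.neg_mul, neg_neg, Matrix.mul_assoc]

lemma HasDerivAt.riccati_rhs {X Φ : ℝ → Matrix K K ℝ} {H : Matrix K K ℝ} {t : ℝ}
    (hX : HasDerivAt X H t) (hXt : IsUnit (X t))
    (hΦ : HasDerivAt Φ (Φ t * ((X t)⁻¹ * H * (X t)⁻¹) * Φ t) t) :
    HasDerivAt (fun s => Φ s * ((X s)⁻¹ * H * (X s)⁻¹) * Φ s)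
      (-((2 : ℝ) • (Φ t * ((X t)⁻¹ * H * (X t)⁻¹) * (X t - Φ t) *
        ((X t)⁻¹ * H * (X t)⁻¹) * Φ t))) t := by
  have hXinv := hX.nonsing_inv hXt
  refine ((hΦ.mul ((hXinv.mul_const H).mul hXinv)).mul hΦ).congr_deriv ?_
  have hcancel : ∀ Z : Matrix K K ℝ, (X t)⁻¹ * (X t * Z) = Z := fun Z => by
    rw [← Matrix.mul_assoc, nonsing_inv_mul _ ((isUnit_iff_isUnit_det _).mp hXt), Matrix.one_mul]
  simp only [Pi.mul_apply, two_smul, mul_sub, sub_mul, mul_add, add_mul, neg_mul, mul_neg,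
    neg_add, neg_sub, Matrix.mul_assoc, hcancel]
  abel

theorem deriv_deriv_apply_invOn_of_affine {S : Finset K} {A C H : Matrix K K ℝ}
    {X Φ D : ℝ → Matrix K K ℝ} (hX : ∀ s, X s = A + s • H)
    (hΦ : ∀ s, Φ s = invOn S (C + proj K S * (X s)⁻¹ * proj K S))
    (hD : ∀ s, D s = (X s)⁻¹ * H * (X s)⁻¹) {U : Set ℝ} (hU : IsOpen U)
    (hXU : ∀ s ∈ U, IsUnit (X s))
    (hNU : ∀ s ∈ U, IsUnit (C + proj K S * (X s)⁻¹ * proj K S + proj K Sᶜ))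
    {t : ℝ} (ht : t ∈ U) (k l : K) :
    deriv (fun s => deriv (fun u => Φ u k l) s) t =
      -((2 : ℝ) • (Φ t * D t * (X t - Φ t) * D t * Φ t)) k l := by
  have hXd : ∀ s, HasDerivAt X H s := fun s => by
    have h := (hasDerivAt_id' (𝕜 := ℝ) s).smul_const (f := H) |>.const_add A
    rw [one_smul] at h
    rwa [funext hX]
  have hΦd : ∀ s ∈ U, HasDerivAt Φ (Φ s * D s * Φ s) s := fun s hs => by
    rw [funext hΦ, hD]
    exact hasDerivAt_invOn_add_proj_mul_inv_mul_proj (hXd s) (hXU s hs) (hNU s hs)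
  have hderiv : (fun s => deriv (fun u => Φ u k l) s) =ᶠ[𝓝 t] fun s => (Φ s * D s * Φ s) k l :=
    eventually_of_mem (hU.mem_nhds ht) fun s hs => ((hΦd s hs).matrix_apply k l).deriv
  have hΦd' := (hXd t).riccati_rhs (hXU t ht) (by rw [← hD]; exact hΦd t ht)
  simp only [← hD] at hΦd'
  rw [hderiv.deriv_eq]
  exact (hΦd'.matrix_apply k l).deriv

end Derivatives

theorem stmt_9_general {I K : Type*} [Fintype I] [DecidableEq I] [Fintype K] [DecidableEq K]
    (Ki : I → Finset K)
    (hacc : ∀ k : K, 2 ≤ (Finset.univ.filter (fun i : I => k ∈ Ki i)).card)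
    (B : I → Matrix K K ℝ) (hB : ∀ i, SPDOn (Ki i) (B i))
    (ε : ℝ)
    (X H : I → Matrix K K ℝ) (hH : ∀ i, (H i).PosSemidef)
    (hXt : ∀ t ∈ Set.Ioo (-ε) (1 : ℝ), ∀ i, SPDOn (Ki i) (X i + t • H i)) :
    ∀ i, ∀ t ∈ Set.Ioo (-ε) (1 : ℝ),
      let Φ : ℝ → Matrix K K ℝ := fun s => Fmap Ki B (fun j => X j + s • H j) i
      let Xm : ℝ → Matrix K K ℝ := fun s => ∑ j ∈ Finset.univ.erase i, (X j + s • H j)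
      let Hm : Matrix K K ℝ := ∑ j ∈ Finset.univ.erase i, H j
      let D : ℝ → Matrix K K ℝ := fun s => (Xm s)⁻¹ * Hm * (Xm s)⁻¹
      ((2 : ℝ) • (Φ t * D t * (Xm t - Φ t) * D t * Φ t)).PosSemidef ∧
      ∀ k l, deriv (fun s => deriv (fun u => Φ u k l) s) t =
        -(((2 : ℝ) • (Φ t * D t * (Xm t - Φ t) * D t * Φ t)) k l) := by
  intro i t ht Φ Xm Hm D
  have hXm : ∀ s ∈ Set.Ioo (-ε) 1, (Xm s).PosDef := fun s hs =>
    posDef_sum_erase_of_SPDOn hacc (hXt s hs) i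
  have hC : (invOn (Ki i) (B i)).PosSemidef := posSemidef_invOn (hB i).posDef_add_proj_compl
  have hN := fun s hs => posDef_add_proj_mul_mul_proj_add_proj_compl (S := Ki i) hC (hXm s hs).inv
  refine ⟨?_, fun k l => ?_⟩
  · have hD : (D t).IsHermitian := by
      simpa only [(hXm t ht).inv.1.eq] using
        isHermitian_mul_mul_conjTranspose (Xm t)⁻¹ (posSemidef_sum _ fun j _ => hH j).1
    exact ((posSemidef_sub_invOn hC (hXm t ht)).mul_mul_mul_mul_of_isHermitian
      (posSemidef_invOn (hN t ht)).1 hD).smul zero_le_two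
  · have hXm_affine : ∀ s, Xm s = ∑ j ∈ Finset.univ.erase i, X j + s • Hm := fun s => by
      simp only [Xm, Hm, Finset.sum_add_distrib, Finset.smul_sum]
    exact deriv_deriv_apply_invOn_of_affine (Φ := Φ) (D := D) hXm_affine (fun _ => rfl)
      (fun _ => rfl) isOpen_Ioo (fun s hs => (hXm s hs).isUnit) (fun s hs => (hN s hs).isUnit)
      ht k l

/-- Concavity of `Φ(t) = F(X + tH)` along the segment towards the maximal fixed point:
`−Φ_i''(t) = 2 Φ_i(t) D_i(t) (X_{-i}(t) − Φ_i(t)) D_i(t) Φ_i(t)` is positive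
semidefinite, where `D_i(t) = X_{-i}(t)⁻¹ H_{-i} X_{-i}(t)⁻¹`. -/
theorem stmt_9 {I K : Type*} [Fintype I] [DecidableEq I] [Fintype K] [DecidableEq K]
    (Ki : I → Finset K)
    (hacc : ∀ k : K, 2 ≤ (Finset.univ.filter (fun i : I => k ∈ Ki i)).card)
    (B : I → Matrix K K ℝ) (hB : ∀ i, SPDOn (Ki i) (B i))
    (ε : ℝ) (hε : 0 < ε)
    (X H : I → Matrix K K ℝ) (hH : ∀ i, (H i).PosSemidef)
    (hfix : ∀ i, X i = Fmap Ki B X i)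
    (hXt : ∀ t ∈ Set.Ioo (-ε) (1 : ℝ), ∀ i, SPDOn (Ki i) (X i + t • H i)) :
    ∀ i, ∀ t ∈ Set.Ioo (-ε) (1 : ℝ),
      let Φ : ℝ → Matrix K K ℝ := fun s => Fmap Ki B (fun j => X j + s • H j) i
      let Xm : ℝ → Matrix K K ℝ := fun s => ∑ j ∈ Finset.univ.erase i, (X j + s • H j)
      let Hm : Matrix K K ℝ := ∑ j ∈ Finset.univ.erase i, H j
      let D : ℝ → Matrix K K ℝ := fun s => (Xm s)⁻¹ * Hm * (Xm s)⁻¹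
      ((2 : ℝ) • (Φ t * D t * (Xm t - Φ t) * D t * Φ t)).PosSemidef ∧
      ∀ k l, deriv (fun s => deriv (fun u => Φ u k l) s) t =
        -(((2 : ℝ) • (Φ t * D t * (Xm t - Φ t) * D t * Φ t)) k l) :=
  stmt_9_general Ki hacc B hB ε X H hH hXt
end

section
/- In the risk-neutral limit with a market maker having full access (H₀ = ℝ^K), the limit equilibrium satisfies X^∞_0 = X^∞_{-0} = Σ_{i≥1} X^∞_i, and consequently each X^∞_i for i ≥ 1 solves (X^∞_i)^{-H_i} = B_i^{-H_i} + π_i (2 X^∞_{-0} − X^∞_i)⁻¹ π_i. -/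
open Matrix BigOperators Filter Topology

/-! Since `H₀` is the whole space, `π₀ = 1` and `(·)^{-H₀}` is the ordinary inverse, so the
market maker's fixed-point equation reads `X₀ = (X_{-0}⁻¹)⁻¹ = X_{-0}`; the inverse exists
because every coordinate is accessed by some trader other than the market maker. Hence
`X_{-i} = X₀ + ∑_{j ≠ 0, i} X_j = 2 X_{-0} − X_i`. Finally `(·)^{-H}` is an involution on
`S_≻^{H}`, and the matrix `B_i^{-H_i} + π_i (X_{-i})⁻¹ π_i` whose `(·)^{-H_i}` is `X_i` lies in
`S_≻^{H_i}`, so applying `(·)^{-H_i}` to the fixed-point equation of trader `i` gives the claim. -/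

section

variable {K : Type*} [Fintype K] [DecidableEq K]

lemma proj_mulVec (S : Finset K) (x : K → ℝ) :
    proj K S *ᵥ x = fun k => if k ∈ S then x k else 0 := by
  ext k
  simp [proj, mulVec_diagonal]

lemma proj_mulVec_of_forall_notMem_eq_zero {S : Finset K} {x : K → ℝ}
    (hx : ∀ j, j ∉ S → x j = 0) : proj K S *ᵥ x = x := by
  ext k
  by_cases hk : k ∈ S <;> simp [proj_mulVec, hk, hx]

lemma proj_mulVec_of_forall_mem_eq_zero {S : Finset K} {x : K → ℝ}
    (hx : ∀ j, j ∈ S → x j = 0) : proj K S *ᵥ x = 0 := by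
  ext k
  by_cases hk : k ∈ S <;> simp [proj_mulVec, hk, hx]

lemma proj_mul_proj (S T : Finset K) : proj K S * proj K T = proj K (S ∩ T) := by
  rw [proj, proj, proj, diagonal_mul_diagonal]
  congr 1
  ext k
  by_cases hS : k ∈ S <;> by_cases hT : k ∈ T <;> simp [hS, hT]

lemma proj_mul_self (S : Finset K) : proj K S * proj K S = proj K S := by
  rw [proj_mul_proj, Finset.inter_self]

lemma proj_empty : proj K ∅ = 0 := by
  simp [proj]

lemma proj_univ : proj K Finset.univ = 1 := by
  simp [proj]

lemma proj_mul_proj_compl (S : Finset K) : proj K S * proj K Sᶜ = 0 := by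
  rw [proj_mul_proj, Finset.inter_compl, proj_empty]

lemma proj_compl_mul_proj (S : Finset K) : proj K Sᶜ * proj K S = 0 := by
  rw [proj_mul_proj, Finset.inter_comm, Finset.inter_compl, proj_empty]

lemma transpose_proj (S : Finset K) : (proj K S)ᵀ = proj K S :=
  diagonal_transpose _

lemma dotProduct_proj_mulVec (S : Finset K) (x v : K → ℝ) :
    x ⬝ᵥ (proj K S *ᵥ v) = (proj K S *ᵥ x) ⬝ᵥ v := by
  rw [dotProduct_mulVec, ← mulVec_transpose, transpose_proj]

lemma dotProduct_proj_mul_mul_proj_mulVec (S : Finset K) (M : Matrix K K ℝ) (x : K → ℝ) :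
    x ⬝ᵥ ((proj K S * M * proj K S) *ᵥ x) =
      (proj K S *ᵥ x) ⬝ᵥ (M *ᵥ (proj K S *ᵥ x)) := by
  rw [← mulVec_mulVec, ← mulVec_mulVec, dotProduct_proj_mulVec]

lemma invOn_univ (M : Matrix K K ℝ) : invOn Finset.univ M = M⁻¹ := by
  rw [invOn, Finset.compl_univ, proj_empty, proj_univ, add_zero, one_mul, mul_one]

lemma spdOn_proj_mul_mul_proj (S : Finset K) {T : Matrix K K ℝ} (hT : T.PosDef) :
    SPDOn S (proj K S * T * proj K S) := by
  refine ⟨?_, fun x hx hx0 => ?_, fun x hx => ?_⟩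
  · simpa [transpose_proj] using hT.posSemidef.mul_mul_conjTranspose_same (proj K S)
  · rw [dotProduct_proj_mul_mul_proj_mulVec, proj_mulVec_of_forall_notMem_eq_zero hx]
    simpa using hT.dotProduct_mulVec_pos hx0
  · rw [← mulVec_mulVec, proj_mulVec_of_forall_mem_eq_zero hx, mulVec_zero]

lemma spdOn_proj (S : Finset K) : SPDOn S (proj K S) := by
  simpa [proj_mul_self] using spdOn_proj_mul_mul_proj S PosDef.one

namespace SPDOn

variable {S : Finset K} {A B : Matrix K K ℝ}

lemma mul_proj (h : SPDOn S B) : B * proj K S = B := by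
  have hcompl : B * proj K Sᶜ = 0 := by
    refine ext_iff_mulVec.mpr fun x => ?_
    rw [← mulVec_mulVec, zero_mulVec]
    refine h.2.2 _ fun j hj => ?_
    simp [proj_mulVec, hj]
  calc B * proj K S = B * proj K S + B * proj K Sᶜ := by rw [hcompl, add_zero]
    _ = B := by rw [← mul_add, proj_add_proj_compl, mul_one]

lemma proj_mul (h : SPDOn S B) : proj K S * B = B := by
  have hB : Bᵀ = B := by rw [← conjTranspose_eq_transpose_of_trivial]; exact h.1.1
  rw [← transpose_transpose (proj K S * B), transpose_mul, transpose_proj, hB, h.mul_proj, hB]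

lemma dotProduct_mulVec_nonneg (h : SPDOn S B) (x : K → ℝ) : 0 ≤ x ⬝ᵥ (B *ᵥ x) := by
  simpa using h.1.dotProduct_mulVec_nonneg x

lemma dotProduct_mulVec_pos_s14 (h : SPDOn S B) {x : K → ℝ} {k : K} (hk : k ∈ S)
    (hx : x k ≠ 0) : 0 < x ⬝ᵥ (B *ᵥ x) := by
  have hPx : proj K S *ᵥ x ≠ 0 := fun h0 => hx (by simpa [proj_mulVec, hk] using congrFun h0 k)
  rw [← h.mul_proj, ← h.proj_mul, mul_assoc, ← mul_assoc, dotProduct_proj_mul_mul_proj_mulVec]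
  refine h.2.1 _ (fun j hj => ?_) hPx
  simp [proj_mulVec, hj]

lemma posDef_add_proj_compl_s14 (h : SPDOn S B) : (B + proj K Sᶜ).PosDef := by
  refine PosDef.of_dotProduct_mulVec_pos (h.1.1.add (isHermitian_proj _)) fun x hx => ?_
  rw [star_trivial, add_mulVec, dotProduct_add]
  by_cases hS : ∀ j, j ∉ S → x j = 0
  · linarith [h.2.1 x hS hx, (spdOn_proj Sᶜ).dotProduct_mulVec_nonneg x]
  · push Not at hS
    obtain ⟨j, hjS, hj⟩ := hS
    linarith [h.dotProduct_mulVec_nonneg x,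
      (spdOn_proj Sᶜ).dotProduct_mulVec_pos_s14 (Finset.mem_compl.mpr hjS) hj]

protected lemma add (hA : SPDOn S A) (hB : SPDOn S B) : SPDOn S (A + B) := by
  refine ⟨hA.1.add hB.1, fun x hx hx0 => ?_, fun x hx => ?_⟩
  · rw [add_mulVec, dotProduct_add]
    linarith [hA.2.1 x hx hx0, hB.2.1 x hx hx0]
  · rw [add_mulVec, hA.2.2 x hx, hB.2.2 x hx, add_zero]

lemma invOn (h : SPDOn S B) : SPDOn S (invOn S B) :=
  spdOn_proj_mul_mul_proj S h.posDef_add_proj_compl_s14.inv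

end SPDOn

lemma posDef_sum_of_forall_exists_mem {I : Type*} (J : Finset I) {Ki : I → Finset K}
    {X : I → Matrix K K ℝ} (hX : ∀ j ∈ J, SPDOn (Ki j) (X j))
    (hcov : ∀ k, ∃ j ∈ J, k ∈ Ki j) : (∑ j ∈ J, X j).PosDef := by
  refine PosDef.of_dotProduct_mulVec_pos
    (posSemidef_sum J fun j hj => (hX j hj).1).isHermitian fun x hx => ?_
  obtain ⟨k, hk⟩ := Function.ne_iff.mp hx
  obtain ⟨j, hjJ, hjk⟩ := hcov k
  rw [star_trivial, sum_mulVec, dotProduct_sum]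
  exact Finset.sum_pos' (fun i hi => (hX i hi).dotProduct_mulVec_nonneg x)
    ⟨j, hjJ, (hX j hjJ).dotProduct_mulVec_pos_s14 hjk hk⟩

lemma invOn_invOn {S : Finset K} {C : Matrix K K ℝ} (h : SPDOn S C) :
    invOn S (invOn S C) = C := by
  set P := proj K S
  set Q := proj K Sᶜ
  set E := C + Q
  have hE : IsUnit E.det := (isUnit_iff_isUnit_det E).mp h.posDef_add_proj_compl_s14.isUnit
  have hPE : P * E = C := by rw [mul_add, h.proj_mul, proj_mul_proj_compl, add_zero]
  have hEP : E * P = C := by rw [add_mul, h.mul_proj, proj_compl_mul_proj, add_zero]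
  have hQE : Q * E = Q := by
    rw [mul_add, ← h.proj_mul, ← mul_assoc, proj_compl_mul_proj, zero_mul, zero_add,
      proj_mul_self]
  have hinv : (P * E⁻¹ * P + Q) * E = 1 := by
    rw [add_mul, hQE, mul_assoc, hPE, ← hEP, ← mul_assoc, mul_assoc P, nonsing_inv_mul _ hE,
      mul_one, proj_mul_self, proj_add_proj_compl]
  change P * (P * E⁻¹ * P + Q)⁻¹ * P = C
  rw [inv_eq_right_inv hinv, hPE, h.mul_proj]

end

lemma Finset.sum_erase_eq_two_smul_sub {ι R M : Type*} [DecidableEq ι] [Semiring R]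
    [AddCommGroup M] [Module R M] {s : Finset ι} {f : ι → M} {a b : ι} (ha : a ∈ s)
    (hb : b ∈ s) (h : f a = ∑ j ∈ s.erase a, f j) :
    ∑ j ∈ s.erase b, f j = (2 : R) • ∑ j ∈ s.erase a, f j - f b := by
  rw [Finset.sum_erase_eq_sub hb, ← Finset.add_sum_erase s f ha, ← h, two_smul]

theorem stmt_14_general {K : Type*} [Fintype K] [DecidableEq K] (m : ℕ)
    (Ki : Fin (m + 1) → Finset K) (hK0 : Ki 0 = Finset.univ)
    (hacc : ∀ k : K, 3 ≤ (Finset.univ.filter (fun i : Fin (m + 1) => k ∈ Ki i)).card)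
    (B : Fin (m + 1) → Matrix K K ℝ) (hB : ∀ i, i ≠ 0 → SPDOn (Ki i) (B i))
    (Xinf : Fin (m + 1) → Matrix K K ℝ)
    (hXspd : ∀ i, SPDOn (Ki i) (Xinf i))
    (hfix : ∀ i, i ≠ 0 → Xinf i = Fmap Ki B Xinf i)
    (hfix0 : Xinf 0 = invOn (Ki 0)
      (proj K (Ki 0) * (∑ j ∈ Finset.univ.erase 0, Xinf j)⁻¹ * proj K (Ki 0))) :
    Xinf 0 = ∑ j ∈ Finset.univ.erase 0, Xinf j ∧
    ∀ i, i ≠ 0 →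
      invOn (Ki i) (Xinf i) = invOn (Ki i) (B i) +
        proj K (Ki i) *
          ((2 : ℝ) • (∑ j ∈ Finset.univ.erase 0, Xinf j) - Xinf i)⁻¹ *
          proj K (Ki i) := by
  have hcover : ∀ i k, ∃ j ∈ Finset.univ.erase i, k ∈ Ki j := fun i k => by
    obtain ⟨j, hj, hji⟩ := Finset.exists_mem_ne (by linarith [hacc k]) i
    exact ⟨j, Finset.mem_erase.mpr ⟨hji, Finset.mem_univ j⟩, (Finset.mem_filter.mp hj).2⟩
  have hpos : ∀ i, (∑ j ∈ Finset.univ.erase i, Xinf j).PosDef := fun i =>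
    posDef_sum_of_forall_exists_mem _ (fun j _ => hXspd j) (hcover i)
  have h0 : Xinf 0 = ∑ j ∈ Finset.univ.erase 0, Xinf j := by
    rw [hfix0, hK0, proj_univ, invOn_univ, one_mul, mul_one,
      nonsing_inv_nonsing_inv _ ((isUnit_iff_isUnit_det _).mp (hpos 0).isUnit)]
  refine ⟨h0, fun i hi => ?_⟩
  rw [← Finset.sum_erase_eq_two_smul_sub (Finset.mem_univ 0) (Finset.mem_univ i) h0, hfix i hi,
    Fmap, invOn_invOn]
  exact (hB i hi).invOn.add (spdOn_proj_mul_mul_proj _ (hpos i).inv)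

/-- Risk-neutral limit with a full-access market maker (`H₀ = ℝ^K`): the limit
equilibrium satisfies `X^∞_0 = X^∞_{-0} = ∑_{i ≥ 1} X^∞_i`, and consequently each
`X^∞_i`, `i ≥ 1`, solves
`(X^∞_i)^{-H_i} = B_i^{-H_i} + π_i (2 X^∞_{-0} − X^∞_i)⁻¹ π_i`. -/
theorem stmt_14 {K : Type*} [Fintype K] [DecidableEq K] (m : ℕ) (hm : 2 ≤ m)
    (Ki : Fin (m + 1) → Finset K) (hK0 : Ki 0 = Finset.univ)
    (hacc : ∀ k : K, 3 ≤ (Finset.univ.filter (fun i : Fin (m + 1) => k ∈ Ki i)).card)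
    (B : Fin (m + 1) → Matrix K K ℝ) (hB : ∀ i, i ≠ 0 → SPDOn (Ki i) (B i))
    (Xinf : Fin (m + 1) → Matrix K K ℝ)
    (hXspd : ∀ i, SPDOn (Ki i) (Xinf i))
    (hfix : ∀ i, i ≠ 0 → Xinf i = Fmap Ki B Xinf i)
    (hfix0 : Xinf 0 = invOn (Ki 0)
      (proj K (Ki 0) * (∑ j ∈ Finset.univ.erase 0, Xinf j)⁻¹ * proj K (Ki 0))) :
    Xinf 0 = ∑ j ∈ Finset.univ.erase 0, Xinf j ∧
    ∀ i, i ≠ 0 →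
      invOn (Ki i) (Xinf i) = invOn (Ki i) (B i) +
        proj K (Ki i) *
          ((2 : ℝ) • (∑ j ∈ Finset.univ.erase 0, Xinf j) - Xinf i)⁻¹ *
          proj K (Ki i) :=
  stmt_14_general m Ki hK0 hacc B hB Xinf hXspd hfix hfix0
end
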